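/- arXiv:2405.13437 — 15 statements merged into one kernel-verified Lean document; each statement's English description precedes it below -/
import Mathlib

section
/- In a frame L, for every element a the meet ⨅{x ∈ L : a < x} is exact; that is, for every b ∈ L one has (⨅{x : a < x}) ⊔ b = ⨅{x ⊔ b : a < x}. -/
open Set

theorem sInf_Ioi_sup_eq_iInf_sup {α : Type*} [CompleteLattice α] (a b : α) :
    sInf (Ioi a) ⊔ b = ⨅ x > a, x ⊔ b := by
  refine le_antisymm sInf_sup_le_iInf_sup ?_
  by_cases hba : b ≤ a
  · calc ⨅ x > a, x ⊔ b = ⨅ x > a, x :=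
          iInf_congr fun _ => iInf_congr fun hx => sup_eq_left.2 (hba.trans hx.le)
      _ = sInf (Ioi a) := sInf_eq_iInf.symm
      _ ≤ sInf (Ioi a) ⊔ b := le_sup_left
  · calc ⨅ x > a, x ⊔ b ≤ a ⊔ b ⊔ b := iInf₂_le (a ⊔ b) (left_lt_sup.2 hba)
      _ = a ⊔ b := sup_right_idem a b
      _ ≤ sInf (Ioi a) ⊔ b := sup_le_sup_right (le_sInf fun _ hx => hx.le) b

/-- In a frame `L`, for every element `a` the meet `⨅ {x | a < x}` is exact:
for every `b` one has `(⨅ {x | a < x}) ⊔ b = ⨅ {x ⊔ b | a < x}`. -/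
theorem exactInf_of_strictly_above {L : Type*} [Order.Frame L] (a : L) :
    ∀ b : L, sInf {x : L | a < x} ⊔ b = sInf ((fun x => x ⊔ b) '' {x : L | a < x}) := by
  intro b
  rw [sInf_image]
  exact sInf_Ioi_sup_eq_iInf_sup a b
end

section
/- Let L be a frame and p ∈ L a prime element. The completely prime filter {x ∈ L : x ≰ p} is closed under exact meets (i.e., is an exact filter) if and only if p is a covered prime. -/
/-!
If `p` is covered and `⨅ S ≤ p` is exact, then `p = ⨅ S ⊔ p = ⨅ (s ⊔ p)`, so some `s ⊔ p = p`,
i.e. some `s ≤ p`. Conversely, if `⨅ S = p` with `p ∉ S`, adjoining to `S` the elements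
`(⨅ (s ⊔ y)) ⇨ (p ⊔ y)` for all `y` gives an exact family with meet `p`, and none of the new
elements lies below `p` because `p ≠ ⊤`; so the filter `{x | x ≰ p}` is not exact.
-/

/-- A subset of a frame has exact infimum if joining commutes with the infimum. -/
def ExactInfSet {L : Type*} [Order.Frame L] (S : Set L) : Prop :=
  ∀ z : L, sInf S ⊔ z = sInf ((fun x => x ⊔ z) '' S)

/-- A filter of a frame: contains `⊤`, upward closed, closed under binary meets. -/
def IsFrameFilter {L : Type*} [Order.Frame L] (F : Set L) : Prop :=
  ⊤ ∈ F ∧ (∀ x y : L, x ∈ F → x ≤ y → y ∈ F) ∧ (∀ x y : L, x ∈ F → y ∈ F → x ⊓ y ∈ F)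

/-- An exact filter: a filter closed under exact meets of its members. -/
def IsExactFilter {L : Type*} [Order.Frame L] (F : Set L) : Prop :=
  IsFrameFilter F ∧ ∀ S : Set L, S ⊆ F → ExactInfSet S → sInf S ∈ F

/-- A prime element of a frame. -/
def IsPrimeElem {L : Type*} [Order.Frame L] (p : L) : Prop :=
  p ≠ ⊤ ∧ ∀ x y : L, x ⊓ y ≤ p → x ≤ p ∨ y ≤ p

/-- A covered prime: a prime `p` such that any meet equal to `p` has a member equal to `p`. -/
def IsCoveredPrime {L : Type*} [Order.Frame L] (p : L) : Prop :=
  IsPrimeElem p ∧ ∀ S : Set L, sInf S = p → p ∈ S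

open Set

namespace Order.Frame

variable {L : Type*} [Order.Frame L]

def exactHull (S : Set L) : Set L :=
  S ∪ range fun y => sInf ((· ⊔ y) '' S) ⇨ (sInf S ⊔ y)

theorem sInf_exactHull (S : Set L) : sInf (exactHull S) = sInf S := by
  refine le_antisymm (sInf_le_sInf subset_union_left) (le_sInf ?_)
  rintro t (ht | ⟨y, rfl⟩)
  · exact sInf_le ht
  · exact le_sup_left.trans le_himp

theorem exactInfSet_exactHull (S : Set L) : ExactInfSet (exactHull S) := by
  intro u
  rw [sInf_exactHull]
  refine le_antisymm (le_sInf ?_) ?_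
  · rintro _ ⟨t, ht, rfl⟩
    exact sup_le_sup_right ((sInf_exactHull S).symm.le.trans (sInf_le ht)) u
  · set f := sInf ((· ⊔ u) '' S)
    have hf : sInf ((· ⊔ u) '' exactHull S) ≤ f :=
      sInf_le_sInf (image_mono subset_union_left)
    have hg : sInf ((· ⊔ u) '' exactHull S) ≤ (f ⇨ (sInf S ⊔ u)) ⊔ u :=
      sInf_le (mem_image_of_mem _ (subset_union_right (mem_range_self u)))
    calc sInf ((· ⊔ u) '' exactHull S) ≤ f ⊓ ((f ⇨ (sInf S ⊔ u)) ⊔ u) := le_inf hf hg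
      _ = f ⊓ (f ⇨ (sInf S ⊔ u)) ⊔ f ⊓ u := inf_sup_left ..
      _ ≤ sInf S ⊔ u := sup_le inf_himp_le (inf_le_right.trans le_sup_right)

/-- An added element below `sInf S` would lie above `y`, making `S` exact at `y` and the
element itself `⊤`. -/
theorem mem_of_mem_exactHull_of_le_sInf {S : Set L} (hS : sInf S ≠ ⊤) {t : L}
    (ht : t ∈ exactHull S) (htS : t ≤ sInf S) : t ∈ S := by
  obtain ht | ⟨y, rfl⟩ := ht
  · exact ht
  exfalso
  have hy : y ≤ sInf S := le_sup_right.trans (le_himp.trans htS)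
  have hexact : sInf ((· ⊔ y) '' S) ≤ sInf S ⊔ y :=
    le_sup_of_le_left (le_sInf fun s hs =>
      (sInf_le (mem_image_of_mem _ hs)).trans (sup_le le_rfl (hy.trans (sInf_le hs))))
  exact hS (top_le_iff.1 ((himp_eq_top_iff.2 hexact).symm.le.trans htS))

end Order.Frame

open Order.Frame

theorem IsPrimeElem.isFrameFilter {L : Type*} [Order.Frame L] {p : L} (hp : IsPrimeElem p) :
    IsFrameFilter {x : L | ¬ x ≤ p} :=
  ⟨fun h => hp.1 (top_le_iff.1 h), fun _ _ hx hxy hy => hx (hxy.trans hy),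
    fun x y hx hy hxy => (hp.2 x y hxy).elim hx hy⟩

theorem IsCoveredPrime.not_sInf_le_of_exactInfSet {L : Type*} [Order.Frame L] {p : L}
    (hp : IsCoveredPrime p) {S : Set L} (hSp : ∀ s ∈ S, ¬ s ≤ p) (hS : ExactInfSet S) :
    ¬ sInf S ≤ p := by
  intro h
  have hcover := hS p
  rw [sup_eq_right.2 h] at hcover
  obtain ⟨s, hs, hsp⟩ := hp.2 _ hcover.symm
  exact hSp s hs (sup_eq_right.1 hsp)

/-- for a prime `p`, the completely prime filter `{x | x ≰ p}` is an exact
filter if and only if `p` is a covered prime. -/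
theorem exactFilter_compl_iff_covered {L : Type*} [Order.Frame L] (p : L)
    (hp : IsPrimeElem p) :
    IsExactFilter {x : L | ¬ x ≤ p} ↔ IsCoveredPrime p := by
  refine ⟨fun ⟨_, hexact⟩ => ⟨hp, fun S hSp => ?_⟩,
    fun hcov => ⟨hp.isFrameFilter, fun S hS => hcov.not_sInf_le_of_exactInfSet hS⟩⟩
  by_contra hpS
  have hsub : exactHull S ⊆ {x : L | ¬ x ≤ p} := by
    intro t ht htp
    have htS : t ∈ S := mem_of_mem_exactHull_of_le_sInf (hSp ▸ hp.1) ht (hSp ▸ htp)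
    exact hpS (le_antisymm htp (hSp ▸ sInf_le htS) ▸ htS)
  have hmem := hexact _ hsub (exactInfSet_exactHull S)
  rw [sInf_exactHull, hSp] at hmem
  exact hmem le_rfl
end

section
/- Let L be a frame and p ∈ L a prime element. Then p is a maximal prime (i.e., the only elements above p are p and ⊤) if and only if the filter {x ∈ L : x ≰ p} is a regular filter, i.e., an intersection of filters of the form {x ∈ L : x ⊔ a = ⊤} with a ∈ L. -/
/-- A regular filter: an intersection of filters of the form `{x | x ⊔ a = ⊤}`. -/
def IsRegularFilter {L : Type*} [Order.Frame L] (F : Set L) : Prop :=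
  ∃ A : Set L, F = ⋂ a ∈ A, {x : L | x ⊔ a = ⊤}

theorem isCoatom_iff_forall_le {L : Type*} [PartialOrder L] [OrderTop L] {p : L} (hp : p ≠ ⊤) :
    IsCoatom p ↔ ∀ x, p ≤ x → x = p ∨ x = ⊤ :=
  ⟨fun h _ hx => (h.le_iff.1 hx).symm,
    fun h => ⟨hp, fun x hx => (h x hx.le).resolve_left hx.ne'⟩⟩

section SemilatticeSup

variable {L : Type*} [SemilatticeSup L] [OrderTop L] {p : L}

theorem IsCoatom.setOf_not_le_eq (hp : IsCoatom p) :
    {x : L | ¬ x ≤ p} = {x | x ⊔ p = ⊤} := by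
  ext x
  exact hp.not_le_iff_codisjoint.trans (codisjoint_comm.trans codisjoint_iff)

theorem isCoatom_of_setOf_not_le_eq_iInter {A : Set L}
    (hA : {x : L | ¬ x ≤ p} = ⋂ a ∈ A, {x | x ⊔ a = ⊤}) : IsCoatom p := by
  have not_le_iff (x : L) : ¬ x ≤ p ↔ ∀ a ∈ A, x ⊔ a = ⊤ := by
    simpa using Set.ext_iff.mp hA x
  obtain ⟨a, haA, hpa⟩ : ∃ a ∈ A, p ⊔ a ≠ ⊤ := by
    simpa using (not_le_iff p).not.mp (not_not_intro le_rfl)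
  have hap : a ≤ p := by
    by_contra hap
    have hpa_top := (not_le_iff (p ⊔ a)).1 (fun h => hap (le_sup_right.trans h)) a haA
    exact hpa (by rwa [sup_assoc, sup_idem] at hpa_top)
  refine ⟨fun hp => hpa (by rw [hp, top_sup_eq]), fun x hpx => ?_⟩
  have hxa := (not_le_iff x).1 hpx.not_ge a haA
  rwa [sup_eq_left.2 (hap.trans hpx.le)] at hxa

theorem isCoatom_iff_exists_setOf_not_le_eq_iInter :
    IsCoatom p ↔ ∃ A : Set L, {x : L | ¬ x ≤ p} = ⋂ a ∈ A, {x | x ⊔ a = ⊤} :=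
  ⟨fun hp => ⟨{p}, by simpa using hp.setOf_not_le_eq⟩,
    fun ⟨_, hA⟩ => isCoatom_of_setOf_not_le_eq_iInter hA⟩

end SemilatticeSup

/-- a prime `p` of a frame is a maximal prime (the only elements above `p`
are `p` and `⊤`) if and only if the filter `{x | x ≰ p}` is regular. -/
theorem maximal_prime_iff_regular {L : Type*} [Order.Frame L] (p : L)
    (hp : IsPrimeElem p) :
    (∀ x : L, p ≤ x → x = p ∨ x = ⊤) ↔ IsRegularFilter {x : L | ¬ x ≤ p} := by
  rw [← isCoatom_iff_forall_le hp.1]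
  exact isCoatom_iff_exists_setOf_not_le_eq_iInter
end

section
/- A T0 topological space X is T_D if and only if for every point x ∈ X the neighborhood filter N(x) = {U ∈ Opens(X) : x ∈ U} is an exact filter of the frame Opens(X), i.e., is closed under exact meets. -/
open TopologicalSpace

/-- A space is `T_D` if every point is the difference of two open sets. -/
def IsTD (X : Type*) [TopologicalSpace X] : Prop :=
  ∀ x : X, ∃ U V : Opens X, (U : Set X) \ (V : Set X) = {x}

/-!
For `T_D ⇒ exact`: if `U \ V = {x}` and `S` is an exact family of neighbourhoods of `x`, then
`U ≤ W ⊔ V` for every `W ∈ S`, so exactness gives `U ≤ ⨅ S ⊔ V`, and `x ∈ U \ V` lies in `⨅ S`.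

Conversely, let `C` be the complement of `closure {x}` and `S = {W ⊔ C | x ∈ W}`. Every open set
either contains `x` or is contained in `C`, which makes the meet of `S` exact, so it contains `x`.
A point of `⨅ S` outside `C` both specializes to `x` and is a specialization of `x`, hence equals
`x` by `T₀`; thus `⨅ S \ C = {x}`.
-/

theorem isFrameFilter_setOf_mem {X : Type*} [TopologicalSpace X] (x : X) :
    IsFrameFilter {U : Opens X | x ∈ U} :=
  ⟨trivial, fun _ _ hU hUV => hUV hU, fun _ _ hU hV => ⟨hU, hV⟩⟩

theorem isExactFilter_setOf_mem_of_diff_eq_singleton {X : Type*} [TopologicalSpace X] {x : X}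
    {U V : Opens X} (h : (U : Set X) \ V = {x}) : IsExactFilter {W : Opens X | x ∈ W} := by
  refine ⟨isFrameFilter_setOf_mem x, fun S hS hexact => ?_⟩
  have hxUV : x ∈ (U : Set X) \ V := h ▸ rfl
  have hU : (U : Set X) ⊆ V ∪ {x} := Set.sdiff_subset_iff.1 h.le
  have hle : U ≤ sInf S ⊔ V := by
    rw [hexact V]
    refine le_sInf ?_
    rintro _ ⟨W, hW, rfl⟩ y hy
    rcases hU hy with hyV | rfl
    · exact Or.inr hyV
    · exact Or.inl (hS hW)
  exact (hle hxUV.1).resolve_right hxUV.2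

theorem exactInfSet_image_sup_of_forall_mem_or_le {L : Type*} [Order.Frame L] (F : Set L) (c : L)
    (hF : ∀ z, z ∈ F ∨ z ≤ c) : ExactInfSet ((· ⊔ c) '' F) := by
  intro z
  refine le_antisymm (le_sInf ?_) ?_
  · rintro _ ⟨_, hw, rfl⟩
    exact sup_le_sup_right (sInf_le hw) z
  have hc : c ≤ sInf ((· ⊔ c) '' F) := le_sInf (by rintro _ ⟨_, _, rfl⟩; exact le_sup_right)
  rcases hF z with hz | hz
  · calc sInf ((· ⊔ z) '' ((· ⊔ c) '' F)) ≤ z ⊔ c ⊔ z := sInf_le ⟨z ⊔ c, ⟨z, hz, rfl⟩, rfl⟩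
      _ = c ⊔ z := by rw [sup_comm z c, sup_assoc, sup_idem]
      _ ≤ sInf ((· ⊔ c) '' F) ⊔ z := sup_le_sup_right hc z
  · have hfix : (· ⊔ z) '' ((· ⊔ c) '' F) = (· ⊔ c) '' F := by
      rw [Set.image_image]
      exact Set.image_congr fun w _ => by simp only [sup_assoc, sup_eq_left.2 hz]
    rw [hfix]
    exact le_sup_left

theorem mem_or_subset_compl_closure_singleton {X : Type*} [TopologicalSpace X] (x : X)
    {s : Set X} (hs : IsOpen s) : x ∈ s ∨ s ⊆ (closure {x})ᶜ := by
  by_cases hx : x ∈ s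
  · exact Or.inl hx
  · exact Or.inr (Set.subset_compl_comm.1
      (closure_minimal (Set.singleton_subset_iff.2 hx) hs.isClosed_compl))

theorem exists_diff_eq_singleton_of_isExactFilter {X : Type*} [TopologicalSpace X] [T0Space X]
    {x : X} (h : IsExactFilter {U : Opens X | x ∈ U}) :
    ∃ U V : Opens X, (U : Set X) \ V = {x} := by
  set C : Opens X := ⟨(closure {x})ᶜ, isClosed_closure.isOpen_compl⟩
  set S : Set (Opens X) := (· ⊔ C) '' {W : Opens X | x ∈ W}
  have hexact : ExactInfSet S := exactInfSet_image_sup_of_forall_mem_or_le _ C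
    fun W => mem_or_subset_compl_closure_singleton x W.isOpen
  have hxS : x ∈ sInf S := h.2 S (by rintro _ ⟨W, hW, rfl⟩; exact Or.inl hW) hexact
  refine ⟨sInf S, C, Set.ext fun y => ⟨?_, ?_⟩⟩
  · rintro ⟨hyS, hyC⟩
    have hyx : y ⤳ x := specializes_iff_forall_open.2 fun s hs hxs =>
      ((sInf_le ⟨⟨s, hs⟩, hxs, rfl⟩ : sInf S ≤ ⟨s, hs⟩ ⊔ C) hyS).resolve_right hyC
    have hxy : x ⤳ y := specializes_iff_mem_closure.2 (not_not.1 hyC)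
    exact (hyx.antisymm hxy).eq
  · rintro rfl
    exact ⟨hxS, not_not.2 (subset_closure rfl)⟩

/-- a `T₀` space is `T_D` if and only if every neighborhood filter
`N(x) = {U ∈ Opens X | x ∈ U}` is an exact filter of the frame of opens. -/
theorem td_iff_neighborhood_filters_exact {X : Type*} [TopologicalSpace X] [T0Space X] :
    IsTD X ↔ ∀ x : X, IsExactFilter {U : Opens X | x ∈ U} := by
  refine ⟨fun hTD x => ?_, fun h x => exists_diff_eq_singleton_of_isExactFilter (h x)⟩
  obtain ⟨U, V, hUV⟩ := hTD x
  exact isExactFilter_setOf_mem_of_diff_eq_singleton hUV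
end

section
/- A T0 topological space X is T1 if and only if for every point x ∈ X the neighborhood filter N(x) = {U ∈ Opens(X) : x ∈ U} is a regular filter of Opens(X), i.e., an intersection of filters of the form {U ∈ Opens(X) : U ∪ V = X} with V open. -/
/-! In a `T₁` space `N(x)` is cut out by the single open `{x}ᶜ`. Conversely, as `⊥ ∉ N(x)`,
regularity of `N(x)` yields an open `a ∌ x` with `U ∪ a = X` for every open `U ∋ x`. If `x ⤳ y`
then `y ∉ a`, so `y` lies in every open neighbourhood of `x`; thus `y ⤳ x`, and `T₀` gives `x = y`. -/

open TopologicalSpace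

/-- A member `a ∈ F` of the defining family would give `a = a ⊔ a = ⊤`, hence `⊥ ∈ F`. -/
theorem IsRegularFilter.exists_notMem_forall_sup_eq_top {L : Type*} [Order.Frame L] {F : Set L}
    (hF : IsRegularFilter F) (hbot : ⊥ ∉ F) : ∃ a ∉ F, ∀ x ∈ F, x ⊔ a = ⊤ := by
  obtain ⟨A, rfl⟩ := hF
  simp only [Set.mem_iInter₂, Set.mem_ofPred_eq, bot_sup_eq, not_forall] at hbot
  obtain ⟨a, ha, ha_ne⟩ := hbot
  refine ⟨a, fun h ↦ ha_ne ?_, fun x hx ↦ Set.mem_iInter₂.mp hx a ha⟩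
  simpa using Set.mem_iInter₂.mp h a ha

theorem TopologicalSpace.Opens.sup_compl_singleton_eq_top_iff {X : Type*} [TopologicalSpace X]
    [T1Space X] (U : Opens X) (x : X) :
    U ⊔ ⟨{x}ᶜ, isOpen_compl_singleton⟩ = ⊤ ↔ x ∈ U := by
  rw [← SetLike.coe_set_eq, Opens.coe_sup, Opens.coe_top, Opens.coe_mk, Set.eq_univ_iff_forall]
  refine ⟨fun h ↦ (h x).resolve_right (by simp), fun hx y ↦ ?_⟩
  by_cases hyx : y = x
  · exact Or.inl (hyx ▸ hx)
  · exact Or.inr hyx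

theorem isRegularFilter_nhds_opens {X : Type*} [TopologicalSpace X] [T1Space X] (x : X) :
    IsRegularFilter {U : Opens X | x ∈ U} :=
  ⟨{⟨{x}ᶜ, isOpen_compl_singleton⟩}, by
    ext U
    simp [Opens.sup_compl_singleton_eq_top_iff]⟩

theorem Specializes.symm_of_isRegularFilter {X : Type*} [TopologicalSpace X] {x y : X}
    (hxy : x ⤳ y) (hreg : IsRegularFilter {U : Opens X | x ∈ U}) : y ⤳ x := by
  obtain ⟨a, hxa, hcover⟩ := hreg.exists_notMem_forall_sup_eq_top (by simp)
  have hya : y ∉ a := fun hya ↦ hxa (specializes_iff_forall_open.mp hxy a a.isOpen hya)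
  refine specializes_iff_forall_open.mpr fun s hs hxs ↦ ?_
  have hy : y ∈ (⟨s, hs⟩ ⊔ a : Opens X) := (hcover ⟨s, hs⟩ hxs).symm ▸ trivial
  exact hy.resolve_right hya

/-- a `T₀` space is `T₁` if and only if every neighborhood filter
`N(x) = {U ∈ Opens X | x ∈ U}` is a regular filter of the frame of opens. -/
theorem t1_iff_neighborhood_filters_regular {X : Type*} [TopologicalSpace X] [T0Space X] :
    T1Space X ↔ ∀ x : X, IsRegularFilter {U : Opens X | x ∈ U} := by
  refine ⟨fun _ ↦ isRegularFilter_nhds_opens, fun hreg ↦ ?_⟩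
  rw [t1Space_iff_specializes_imp_eq]
  exact fun x y hxy ↦ (hxy.antisymm (hxy.symm_of_isRegularFilter (hreg x))).eq
end

section
/- Let f : L → M be a surjective frame homomorphism such that f preserves exact meets, i.e., f(⨅_i x_i) = ⨅_i f(x_i) for every family (x_i) with exact infimum. Then f is exact: for every family (x_i) in L with exact infimum, the family (f(x_i)) has exact infimum in M. -/
theorem ExactInfSet.image_sup_right {L : Type*} [Order.Frame L] {S : Set L}
    (hS : ExactInfSet S) (w : L) : ExactInfSet ((fun x => x ⊔ w) '' S) := by
  intro u
  rw [← hS w, sup_assoc, hS (w ⊔ u), Set.image_image]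
  simp only [sup_assoc]

theorem FrameHom.sInf_image_sup_apply {L M : Type*} [Order.Frame L] [Order.Frame M]
    (f : FrameHom L M)
    (hpres : ∀ S : Set L, ExactInfSet S → f (sInf S) = sInf (f '' S))
    {S : Set L} (hS : ExactInfSet S) (w : L) :
    sInf (f '' S) ⊔ f w = sInf ((fun y => y ⊔ f w) '' (f '' S)) :=
  calc sInf (f '' S) ⊔ f w
      = f (sInf S ⊔ w) := by rw [map_sup, hpres S hS]
    _ = f (sInf ((fun x => x ⊔ w) '' S)) := by rw [hS w]
    _ = sInf (f '' ((fun x => x ⊔ w) '' S)) := hpres _ (hS.image_sup_right w)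
    _ = sInf ((fun y => y ⊔ f w) '' (f '' S)) := by
        rw [Set.image_comm (g' := fun y => y ⊔ f w) fun x => map_sup f x w]

/-- a surjective frame homomorphism preserving exact meets is exact:
images of families with exact infimum have exact infimum. -/
theorem surjective_preserving_exact_is_exact {L M : Type*} [Order.Frame L] [Order.Frame M]
    (f : FrameHom L M) (hsurj : Function.Surjective f)
    (hpres : ∀ S : Set L, ExactInfSet S → f (sInf S) = sInf (f '' S)) :
    ∀ S : Set L, ExactInfSet S → ExactInfSet (f '' S) := by
  intro S hS z
  obtain ⟨w, rfl⟩ := hsurj z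
  exact f.sInf_image_sup_apply hpres hS w
end

section
/- Let f : L → M be a frame homomorphism with right adjoint f_*, suppose M is T_D-spatial (every element of M is the infimum of the covered primes above it), and suppose f_*(p) is a covered prime of L whenever p is a covered prime of M. Then f is exact: for every family (x_i) in L with exact infimum, the family (f(x_i)) has exact infimum in M and ⨅_i f(x_i) = f(⨅_i x_i). -/
/-- A frame is `T_D`-spatial if every element is the infimum of the covered primes above it. -/
def IsTDSpatial (L : Type*) [Order.Frame L] : Prop :=
  ∀ b : L, b = sInf {p : L | IsCoveredPrime p ∧ b ≤ p}

/-!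
A covered prime `p` of `M` above `f (⨅ S)` gives the covered prime `g p` of `L` above `⨅ S`.
Exactness of `S` at `z = g p` yields `⨅ {x ⊔ g p | x ∈ S} = g p`, so coveredness produces some
`x ∈ S` with `x ≤ g p`, i.e. `f x ≤ p`. As every element of `M` is the meet of the covered primes
above it, this yields both the equality and the exactness of `f '' S`.
-/

theorem ExactInfSet.exists_le_of_isCoveredPrime {L : Type*} [Order.Frame L] {S : Set L}
    (hS : ExactInfSet S) {q : L} (hq : IsCoveredPrime q) (hle : sInf S ≤ q) : ∃ x ∈ S, x ≤ q := by
  have hinf : sInf ((fun x => x ⊔ q) '' S) = q := by rw [← hS q, sup_eq_right.mpr hle]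
  obtain ⟨x, hxS, hxq⟩ := hq.2 _ hinf
  exact ⟨x, hxS, hxq ▸ le_sup_left⟩

theorem IsTDSpatial.le_of_forall_isCoveredPrime {M : Type*} [Order.Frame M] (hM : IsTDSpatial M)
    {a b : M} (h : ∀ p, IsCoveredPrime p → b ≤ p → a ≤ p) : a ≤ b := by
  rw [hM b]
  exact le_sInf fun p ⟨hp, hbp⟩ => h p hp hbp

theorem exists_map_le_of_map_sInf_le {L M : Type*} [Order.Frame L] [Order.Frame M] {f : L → M}
    {g : M → L} (gc : GaloisConnection f g)
    (hcov : ∀ p : M, IsCoveredPrime p → IsCoveredPrime (g p)) {S : Set L} (hS : ExactInfSet S)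
    {p : M} (hp : IsCoveredPrime p) (hle : f (sInf S) ≤ p) : ∃ x ∈ S, f x ≤ p := by
  obtain ⟨x, hxS, hxp⟩ := hS.exists_le_of_isCoveredPrime (hcov p hp) (gc.le_iff_le.mp hle)
  exact ⟨x, hxS, gc.le_iff_le.mpr hxp⟩

/-- a `T_D` frame homomorphism into a `T_D`-spatial frame is exact. -/
theorem td_morphism_is_exact {L M : Type*} [Order.Frame L] [Order.Frame M]
    (f : FrameHom L M) (g : M → L) (adj : ∀ (a : L) (b : M), f a ≤ b ↔ a ≤ g b)
    (hspat : IsTDSpatial M)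
    (hcov : ∀ p : M, IsCoveredPrime p → IsCoveredPrime (g p)) :
    ∀ S : Set L, ExactInfSet S → ExactInfSet (f '' S) ∧ f (sInf S) = sInf (f '' S) := by
  intro S hS
  have hcover (p : M) : IsCoveredPrime p → f (sInf S) ≤ p → ∃ x ∈ S, f x ≤ p :=
    exists_map_le_of_map_sInf_le adj hcov hS
  have hmap : f (sInf S) = sInf (f '' S) := by
    refine le_antisymm (le_sInf ?_) (hspat.le_of_forall_isCoveredPrime fun p hp hle => ?_)
    · rintro _ ⟨x, hxS, rfl⟩
      exact OrderHomClass.mono f (sInf_le hxS)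
    · obtain ⟨x, hxS, hxp⟩ := hcover p hp hle
      exact (sInf_le (Set.mem_image_of_mem f hxS)).trans hxp
  refine ⟨fun z => le_antisymm ?_ (hspat.le_of_forall_isCoveredPrime fun p hp hle => ?_), hmap⟩
  · exact sInf_sup_le_iInf_sup.trans_eq sInf_image.symm
  · rw [sup_le_iff, ← hmap] at hle
    obtain ⟨x, hxS, hxp⟩ := hcover p hp hle.1
    exact (sInf_le (Set.mem_image_of_mem _ (Set.mem_image_of_mem f hxS))).trans (sup_le hxp hle.2)
end

section
/- A frame L is subfit if and only if every exact filter of L is regular. -/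
/-- A frame is subfit if `x ≰ y` is witnessed by some `u` with `x ⊔ u = ⊤ ≠ y ⊔ u`. -/
def IsSubfit (L : Type*) [Order.Frame L] : Prop :=
  ∀ x y : L, ¬ x ≤ y → ∃ u : L, x ⊔ u = ⊤ ∧ y ⊔ u ≠ ⊤

section

variable {L : Type*} [Order.Frame L]

theorem isExactFilter_Ici (x : L) : IsExactFilter (Set.Ici x) :=
  ⟨⟨le_top, fun _ _ ha hab => ha.trans hab, fun _ _ => le_inf⟩,
    fun _ hS _ => le_sInf fun _ hs => hS hs⟩

theorem IsRegularFilter.exists_sup_eq_top_and_sup_ne_top {F : Set L} (hF : IsRegularFilter F)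
    {x y : L} (hx : x ∈ F) (hy : y ∉ F) : ∃ a, x ⊔ a = ⊤ ∧ y ⊔ a ≠ ⊤ := by
  obtain ⟨A, rfl⟩ := hF
  simp only [Set.mem_iInter, Set.mem_ofPred_eq, not_forall] at hx hy
  obtain ⟨a, ha, hya⟩ := hy
  exact ⟨a, hx a ha, hya⟩

namespace IsSubfit

variable (hL : IsSubfit L) {F : Set L} {y : L} (hy : ∀ a, (∀ x ∈ F, x ⊔ a = ⊤) → y ⊔ a = ⊤)
include hL hy

theorem sInf_image_sup_sup_le (z : L) : sInf ((fun x => x ⊔ y ⊔ z) '' F) ≤ y ⊔ z := by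
  by_contra h
  obtain ⟨u, hu, hyzu⟩ := hL _ _ h
  have hA : ∀ x ∈ F, x ⊔ (y ⊔ z ⊔ u) = ⊤ := fun x hx => top_le_iff.1 <|
    calc ⊤ = sInf ((fun x => x ⊔ y ⊔ z) '' F) ⊔ u := hu.symm
      _ ≤ x ⊔ y ⊔ z ⊔ u := sup_le_sup_right (sInf_le (Set.mem_image_of_mem _ hx)) u
      _ = x ⊔ (y ⊔ z ⊔ u) := by simp only [sup_assoc]
  exact hyzu (by simpa [← sup_assoc] using hy _ hA)

theorem sInf_image_sup_eq : sInf ((· ⊔ y) '' F) = y :=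
  le_antisymm (by simpa using hL.sInf_image_sup_sup_le hy ⊥)
    (le_sInf (Set.forall_mem_image.2 fun _ _ => le_sup_right))

theorem exactInfSet_image_sup : ExactInfSet ((· ⊔ y) '' F) := fun z => by
  rw [hL.sInf_image_sup_eq hy, Set.image_image]
  exact le_antisymm (le_sInf (Set.forall_mem_image.2 fun _ _ => sup_le_sup_right le_sup_right z))
    (hL.sInf_image_sup_sup_le hy z)

omit hy in
theorem isRegularFilter (hF : IsExactFilter F) : IsRegularFilter F := by
  obtain ⟨⟨-, hup, -⟩, hexact⟩ := hF
  refine ⟨{a | ∀ x ∈ F, x ⊔ a = ⊤}, Set.Subset.antisymm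
    (fun x hx => Set.mem_iInter₂.2 fun _ ha => ha x hx) fun y hy => ?_⟩
  replace hy : ∀ a, (∀ x ∈ F, x ⊔ a = ⊤) → y ⊔ a = ⊤ := by simpa using hy
  have hS : (· ⊔ y) '' F ⊆ F := Set.forall_mem_image.2 fun x hx => hup x _ hx le_sup_left
  simpa [hL.sInf_image_sup_eq hy] using hexact _ hS (hL.exactInfSet_image_sup hy)

end IsSubfit

end

/-- a frame is subfit if and only if every exact filter is regular. -/
theorem subfit_iff_exact_filters_regular {L : Type*} [Order.Frame L] :
    IsSubfit L ↔ ∀ F : Set L, IsExactFilter F → IsRegularFilter F :=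
  ⟨fun hL _ hF => hL.isRegularFilter hF, fun h x _ hxy =>
    (h _ (isExactFilter_Ici x)).exists_sup_eq_top_and_sup_ne_top le_rfl hxy⟩
end

section
/- Let L be a subfit frame. Then every sublocale of L is complemented in the lattice of sublocales (i.e., for every sublocale S there is a sublocale T with S ∩ T = {⊤} and every element of L an infimum of a subset of S ∪ T) if and only if every strongly exact filter of L is exact. -/
/-- A subset of a frame has strongly exact infimum. -/
def StronglyExactInfSet {L : Type*} [Order.Frame L] (S : Set L) : Prop :=
  ∀ y : L, (∀ s ∈ S, s ⇨ y = y) → sInf S ⇨ y = y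

/-- A strongly exact filter: a filter closed under strongly exact meets of its members. -/
def IsStronglyExactFilter {L : Type*} [Order.Frame L] (F : Set L) : Prop :=
  IsFrameFilter F ∧ ∀ S : Set L, S ⊆ F → StronglyExactInfSet S → sInf S ∈ F

/-- A sublocale of a frame: closed under all infima and under `x ⇨ -`. -/
def IsSublocale {L : Type*} [Order.Frame L] (S : Set L) : Prop :=
  (∀ T : Set L, T ⊆ S → sInf T ∈ S) ∧ ∀ x : L, ∀ s ∈ S, x ⇨ s ∈ S

section CompleteLattice

variable {L : Type*} [CompleteLattice L]

/-- For a sublocale `S` this is the nucleus `ν_S` of `S`. -/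
def infAbove (S : Set L) (x : L) : L := sInf {s | s ∈ S ∧ x ≤ s}

lemma le_infAbove (S : Set L) (x : L) : x ≤ infAbove S x := le_sInf fun _ hs => hs.2

lemma infAbove_le {S : Set L} {x s : L} (hs : s ∈ S) (hxs : x ≤ s) : infAbove S x ≤ s :=
  sInf_le ⟨hs, hxs⟩

lemma infAbove_anti {S T : Set L} (hST : S ⊆ T) (x : L) : infAbove T x ≤ infAbove S x :=
  sInf_le_sInf fun _ hs => ⟨hST hs.1, hs.2⟩

lemma infAbove_mono (S : Set L) {x y : L} (hxy : x ≤ y) : infAbove S x ≤ infAbove S y :=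
  sInf_le_sInf fun _ hs => ⟨hs.1, hxy.trans hs.2⟩

lemma infAbove_infAbove (S : Set L) (x : L) : infAbove S (infAbove S x) = infAbove S x :=
  le_antisymm (le_sInf fun _ hs => infAbove_le hs.1 (infAbove_le hs.1 hs.2))
    (le_infAbove S _)

end CompleteLattice

section Frame

variable {L : Type*} [Order.Frame L]

lemma IsSublocale.top_mem {S : Set L} (hS : IsSublocale S) : ⊤ ∈ S := by
  simpa using hS.1 ∅ (Set.empty_subset S)

lemma IsSublocale.infAbove_mem {S : Set L} (hS : IsSublocale S) (x : L) : infAbove S x ∈ S :=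
  hS.1 _ fun _ hs => hs.1

lemma IsSublocale.inter {S T : Set L} (hS : IsSublocale S) (hT : IsSublocale T) :
    IsSublocale (S ∩ T) :=
  ⟨fun M hM => ⟨hS.1 M fun _ hm => (hM hm).1, hT.1 M fun _ hm => (hM hm).2⟩,
    fun x _ hs => ⟨hS.2 x _ hs.1, hT.2 x _ hs.2⟩⟩

/-- The intersection of the open sublocales `{b ⇨ x | x}`, `b ∈ B`. -/
lemma isSublocale_setOf_himp_eq (B : Set L) : IsSublocale {v : L | ∀ b ∈ B, b ⇨ v = v} := by
  refine ⟨fun M hM b hb => ?_, fun c v hv b hb => ?_⟩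
  · refine le_antisymm (le_sInf fun v hv => ?_) le_himp
    exact (himp_le_himp_left (sInf_le hv)).trans (hM hv b hb).le
  · rw [himp_himp, inf_comm, ← himp_himp, hv b hb]

lemma exists_inf_eq_of_forall_exists_sInf_eq {S T : Set L} (hS : IsSublocale S)
    (hT : IsSublocale T) (hST : ∀ x : L, ∃ A : Set L, A ⊆ S ∪ T ∧ sInf A = x) (x : L) :
    ∃ s ∈ S, ∃ t ∈ T, s ⊓ t = x := by
  obtain ⟨A, hA, rfl⟩ := hST x
  refine ⟨sInf (A ∩ S), hS.1 _ Set.inter_subset_right, sInf (A ∩ T),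
    hT.1 _ Set.inter_subset_right, ?_⟩
  rw [← sInf_union, ← Set.inter_union_distrib_left, Set.inter_eq_left.2 hA]

/-- Writing `x = s ⊓ t`, the element `t ⇨ x = t ⇨ s` of `S` is fixed by `x ⇨ -` and lies
above `x`, so it is `⊤`; hence `x = t`. -/
lemma mem_of_forall_himp_eq {S T : Set L} (hS : IsSublocale S) (hT : IsSublocale T)
    (hST : ∀ x : L, ∃ A : Set L, A ⊆ S ∪ T ∧ sInf A = x) {x : L}
    (hx : ∀ s ∈ S, x ⇨ s = s) : x ∈ T := by
  obtain ⟨s, hs, t, ht, rfl⟩ := exists_inf_eq_of_forall_exists_sInf_eq hS hT hST x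
  have hts : t ⇨ s ⊓ t = t ⇨ s := by rw [himp_inf_distrib, himp_self, inf_top_eq]
  have hmem : t ⇨ s ⊓ t ∈ S := hts ▸ hS.2 t s hs
  have htop : t ⇨ s ⊓ t = ⊤ := by
    rw [← hx _ hmem, himp_eq_top_iff]
    exact le_himp_iff.2 inf_le_left
  rwa [le_antisymm inf_le_right (himp_eq_top_iff.1 htop)]

lemma himp_eq_of_mem_of_sup_mem {S T : Set L} (hS : IsSublocale S) (hT : IsSublocale T)
    (hST : S ∩ T = {⊤}) {m y : L} (hy : y ∈ S) (hmy : m ⊔ y ∈ T) : m ⇨ y = y := by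
  have hcalc : (m ⇨ y) ⇨ (m ⊔ y) = (m ⇨ y) ⇨ y := by
    refine le_antisymm (le_himp_iff.2 ?_) (himp_le_himp_left le_sup_right)
    rw [himp_inf_self, inf_sup_right]
    exact sup_le inf_himp_le inf_le_left
  have hmem : (m ⇨ y) ⇨ y ∈ S ∩ T := ⟨hS.2 _ y hy, hcalc ▸ hT.2 _ _ hmy⟩
  rw [hST, Set.mem_singleton_iff, himp_eq_top_iff] at hmem
  exact le_antisymm hmem le_himp

lemma stronglyExactInfSet_of_exactInfSet
    (hcomp : ∀ S : Set L, IsSublocale S → ∃ T : Set L, IsSublocale T ∧ S ∩ T = {⊤} ∧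
      ∀ x : L, ∃ A : Set L, A ⊆ S ∪ T ∧ sInf A = x)
    {B : Set L} (hB : ExactInfSet B) : StronglyExactInfSet B := by
  intro y hy
  obtain ⟨T, hT, hVT, hjoin⟩ := hcomp _ (isSublocale_setOf_himp_eq B)
  have hsup : sInf B ⊔ y ∈ T := by
    rw [hB y]
    refine hT.1 _ ?_
    rintro _ ⟨b, hb, rfl⟩
    refine mem_of_forall_himp_eq (isSublocale_setOf_himp_eq B) hT hjoin fun v hv => ?_
    rw [sup_himp_distrib, hv b hb, inf_eq_left]
    exact le_himp
  exact himp_eq_of_mem_of_sup_mem (isSublocale_setOf_himp_eq B) hT hVT hy hsup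

/-- The `a` whose closed sublocale `Set.Ici a` meets `S` only in `⊤`. -/
def filterMissing (S : Set L) : Set L := {a | ∀ v ∈ S, a ≤ v → v = ⊤}

/-- The join of the closed sublocales `Set.Ici a`, `a ∈ G`, when `G` is an upper set. -/
def closedJoin (G : Set L) : Set L := {t | infAbove G t = t}

lemma mem_closedJoin {G : Set L} {t : L} : t ∈ closedJoin G ↔ infAbove G t = t := Iff.rfl

lemma isUpperSet_filterMissing (S : Set L) : IsUpperSet (filterMissing S) :=
  fun _ _ hab ha v hv hle => ha v hv (hab.trans hle)

lemma filterMissing_anti {S T : Set L} (hST : S ⊆ T) : filterMissing T ⊆ filterMissing S :=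
  fun _ ha v hv => ha v (hST hv)

lemma himp_eq_of_mem_filterMissing {S : Set L} (hS : IsSublocale S) {a v : L}
    (ha : a ∈ filterMissing S) (hv : v ∈ S) : a ⇨ v = v := by
  refine le_antisymm ?_ le_himp
  refine himp_eq_top_iff.1 (ha _ (hS.2 _ v hv) (le_himp_iff.2 ?_))
  rw [inf_comm]
  exact himp_inf_le

lemma isStronglyExactFilter_filterMissing {S : Set L} (hS : IsSublocale S) :
    IsStronglyExactFilter (filterMissing S) := by
  refine ⟨⟨fun v _ hle => top_unique hle, fun _ _ ha hab => isUpperSet_filterMissing S hab ha,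
    fun a b ha hb v hv hle => ha v hv ?_⟩, fun A hA hSE v hv hle => ?_⟩
  · refine himp_eq_top_iff.1 (hb _ (hS.2 a v hv) (le_himp_iff.2 ?_))
    rwa [inf_comm]
  · rw [← hSE v fun a haA => himp_eq_of_mem_filterMissing hS (hA haA) hv]
    exact himp_eq_top_iff.2 hle

lemma infAbove_mem_closedJoin (G : Set L) (x : L) : infAbove G x ∈ closedJoin G :=
  infAbove_infAbove G x

lemma closedJoin_mono {G H : Set L} (hGH : G ⊆ H) : closedJoin G ⊆ closedJoin H :=
  fun t ht => le_antisymm ((infAbove_anti hGH t).trans ht.le) (le_infAbove H t)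

lemma isSublocale_closedJoin {G : Set L} (hG : IsUpperSet G) : IsSublocale (closedJoin G) := by
  refine ⟨fun M hM => le_antisymm (le_sInf fun m hm => ?_) (le_infAbove G _), fun c t ht => ?_⟩
  · exact (infAbove_mono G (sInf_le hm)).trans (hM hm).le
  · refine le_antisymm ?_ (le_infAbove G _)
    have hle : infAbove G (c ⇨ t) ≤ c ⇨ infAbove G t := by
      refine le_himp_iff.2 (le_sInf ?_)
      rintro b ⟨hbG, htb⟩
      exact le_himp_iff.1 (infAbove_le (hG le_himp hbG) (himp_le_himp_left htb))
    rwa [mem_closedJoin.1 ht] at hle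

lemma infAbove_inf_infAbove_filterMissing_le (hL : IsSubfit L) (S : Set L) (w : L) :
    infAbove S w ⊓ infAbove (filterMissing S) w ≤ w := by
  by_contra h
  obtain ⟨u, h1, h2⟩ := hL _ w h
  have hS : infAbove S w ⊔ u = ⊤ := top_unique (h1 ▸ sup_le_sup_right inf_le_left u)
  have hF : infAbove (filterMissing S) w ⊔ u = ⊤ :=
    top_unique (h1 ▸ sup_le_sup_right inf_le_right u)
  have hwu : w ⊔ u ∈ filterMissing S := fun v hv hle =>
    top_unique (hS ▸ sup_le (infAbove_le hv (le_sup_left.trans hle)) (le_sup_right.trans hle))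
  exact h2 (top_unique (hF ▸ sup_le (infAbove_le hwu le_sup_left) le_sup_right))

lemma exists_subset_union_closedJoin_sInf_eq (hL : IsSubfit L) {S : Set L} (hS : IsSublocale S)
    (w : L) : ∃ A : Set L, A ⊆ S ∪ closedJoin (filterMissing S) ∧ sInf A = w := by
  refine ⟨{infAbove S w, infAbove (filterMissing S) w}, ?_, ?_⟩
  · exact Set.insert_subset (Or.inl (hS.infAbove_mem w))
      (Set.singleton_subset_iff.2 (Or.inr (infAbove_mem_closedJoin _ w)))
  · rw [sInf_pair]
    exact le_antisymm (infAbove_inf_infAbove_filterMissing_le hL S w)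
      (le_inf (le_infAbove _ _) (le_infAbove _ _))

/-- Both `infAbove W (x ⊔ z)` and `infAbove (filterMissing W) (x ⊔ z)` bound the meet of the
`a ⊔ z` from above, and subfitness bounds their meet by `x ⊔ z`. -/
lemma exactInfSet_of_subset_closedJoin (hL : IsSubfit L) {W : Set L} (hW : IsSublocale W)
    (hWT : W ⊆ closedJoin (filterMissing W)) {x : L} (hx : x ∈ W) :
    ExactInfSet {a | a ∈ filterMissing W ∧ x ≤ a} := by
  intro z
  rw [show sInf _ = x from hWT hx]
  refine le_antisymm (le_sInf ?_) ?_
  · rintro _ ⟨a, ha, rfl⟩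
    exact sup_le_sup_right ha.2 z
  · set M := sInf ((· ⊔ z) '' {a | a ∈ filterMissing W ∧ x ≤ a})
    have hM : ∀ y, x ⊔ z ≤ y → M ≤ infAbove (filterMissing W) y := by
      refine fun y hy => le_sInf fun a ha => ?_
      have hxa : x ⊔ z ≤ a := hy.trans ha.2
      calc M ≤ a ⊔ z := sInf_le ⟨a, ⟨ha.1, le_sup_left.trans hxa⟩, rfl⟩
        _ = a := sup_eq_left.2 (le_sup_right.trans hxa)
    have hMW : M ≤ infAbove W (x ⊔ z) := by
      have := hM _ (le_infAbove W (x ⊔ z))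
      rwa [mem_closedJoin.1 (hWT (hW.infAbove_mem _))] at this
    exact (le_inf hMW (hM _ le_rfl)).trans (infAbove_inf_infAbove_filterMissing_le hL W _)

lemma eq_top_of_subset_closedJoin (hL : IsSubfit L)
    (hSE : ∀ F : Set L, IsStronglyExactFilter F → IsExactFilter F) {W : Set L}
    (hW : IsSublocale W) (hWT : W ⊆ closedJoin (filterMissing W)) {x : L} (hx : x ∈ W) :
    x = ⊤ := by
  have hxF := (hSE _ (isStronglyExactFilter_filterMissing hW)).2 _ (fun _ ha => ha.1)
    (exactInfSet_of_subset_closedJoin hL hW hWT hx)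
  rw [show sInf _ = x from hWT hx] at hxF
  exact hxF x hx le_rfl

/-- `W := S ∩ closedJoin (filterMissing S)` satisfies `W ⊆ closedJoin (filterMissing W)`,
because `filterMissing` is antitone. -/
lemma inter_closedJoin_filterMissing_eq (hL : IsSubfit L)
    (hSE : ∀ F : Set L, IsStronglyExactFilter F → IsExactFilter F) {S : Set L}
    (hS : IsSublocale S) : S ∩ closedJoin (filterMissing S) = {⊤} := by
  have hW := hS.inter (isSublocale_closedJoin (isUpperSet_filterMissing S))
  have hWT : S ∩ closedJoin (filterMissing S) ⊆
      closedJoin (filterMissing (S ∩ closedJoin (filterMissing S))) :=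
    fun _ hw => closedJoin_mono (filterMissing_anti Set.inter_subset_left) hw.2
  exact Set.eq_singleton_iff_unique_mem.2
    ⟨hW.top_mem, fun _ hx => eq_top_of_subset_closedJoin hL hSE hW hWT hx⟩

end Frame

/-- for a subfit frame `L`, every sublocale of `L` is complemented in the
lattice of sublocales if and only if every strongly exact filter of `L` is exact. -/
theorem subfit_scattered_iff_se_eq_e {L : Type*} [Order.Frame L] (hL : IsSubfit L) :
    (∀ S : Set L, IsSublocale S → ∃ T : Set L, IsSublocale T ∧ S ∩ T = {⊤} ∧
      ∀ x : L, ∃ A : Set L, A ⊆ S ∪ T ∧ sInf A = x) ↔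
    (∀ F : Set L, IsStronglyExactFilter F → IsExactFilter F) := by
  constructor
  · exact fun hcomp F hF =>
      ⟨hF.1, fun B hBF hB => hF.2 B hBF (stronglyExactInfSet_of_exactInfSet hcomp hB)⟩
  · exact fun hSE S hS => ⟨closedJoin (filterMissing S),
      isSublocale_closedJoin (isUpperSet_filterMissing S),
      inter_closedJoin_filterMissing_eq hL hSE hS, exists_subset_union_closedJoin_sInf_eq hL hS⟩
end

section
/- In a frame L, for every a ∈ L the closed sublocale 𝔠(a) = {x ∈ L : a ≤ x} and the open sublocale 𝔬(a) = {a ⇨ b : b ∈ L} are exact sublocales. -/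
/-- The surjection `ν_S` associated to a sublocale `S`. -/
def nuMap {L : Type*} [Order.Frame L] (S : Set L) (x : L) : L :=
  sInf {s ∈ S | x ≤ s}

/-- An exact sublocale: a sublocale whose surjection preserves exact meets. -/
def IsExactSublocale {L : Type*} [Order.Frame L] (S : Set L) : Prop :=
  IsSublocale S ∧ ∀ T : Set L, ExactInfSet T → sInf (nuMap S '' T) = nuMap S (sInf T)


/-!
The surjection of `𝔠(a)` is `a ⊔ -` and that of `𝔬(a)` is `a ⇨ -`. Joining with `a` commutes
with an exact meet by the very definition of exactness, while `a ⇨ -` is a right adjoint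
(of `a ⊓ -`) and so preserves every meet.
-/

section

variable {L : Type*} [Order.Frame L]

theorem himp_sInf_eq (a : L) (T : Set L) : a ⇨ sInf T = sInf ((a ⇨ ·) '' T) := by
  rw [(gc_inf_himp (a := a)).u_sInf, sInf_image]

theorem nuMap_eq_of_isLeast {S : Set L} {x y : L} (h : IsLeast {s ∈ S | x ≤ s} y) :
    nuMap S x = y :=
  h.isGLB.sInf_eq

def closedSublocale (a : L) : Set L := {x | a ≤ x}

def openSublocale (a : L) : Set L := {y | ∃ b : L, y = a ⇨ b}

theorem mem_openSublocale_iff {a y : L} : y ∈ openSublocale a ↔ a ⇨ y = y :=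
  ⟨by rintro ⟨b, rfl⟩; exact himp_idem, fun h => ⟨y, h.symm⟩⟩

theorem nuMap_closedSublocale (a : L) : nuMap (closedSublocale a) = (a ⊔ ·) :=
  funext fun _ => nuMap_eq_of_isLeast ⟨⟨le_sup_left, le_sup_right⟩, fun _ hs => sup_le hs.1 hs.2⟩

theorem nuMap_openSublocale (a : L) : nuMap (openSublocale a) = (a ⇨ ·) := by
  refine funext fun x => nuMap_eq_of_isLeast ⟨⟨⟨x, rfl⟩, le_himp⟩, ?_⟩
  rintro s ⟨hs, hxs⟩
  exact (himp_le_himp_left hxs).trans_eq (mem_openSublocale_iff.mp hs)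

theorem isSublocale_closedSublocale (a : L) : IsSublocale (closedSublocale a) :=
  ⟨fun _ hT => le_sInf hT, fun _ _ hs => le_himp_iff.mpr (inf_le_left.trans hs)⟩

theorem isSublocale_openSublocale (a : L) : IsSublocale (openSublocale a) := by
  refine ⟨fun T hT => mem_openSublocale_iff.mpr ?_, fun x s hs => mem_openSublocale_iff.mpr ?_⟩
  · rw [himp_sInf_eq, Set.image_congr fun t ht => mem_openSublocale_iff.mp (hT ht), Set.image_id']
  · rw [himp_left_comm, mem_openSublocale_iff.mp hs]

theorem isExactSublocale_closedSublocale (a : L) : IsExactSublocale (closedSublocale a) := by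
  refine ⟨isSublocale_closedSublocale a, fun T hT => ?_⟩
  simp only [nuMap_closedSublocale, sup_comm a, hT a]

theorem isExactSublocale_openSublocale (a : L) : IsExactSublocale (openSublocale a) :=
  ⟨isSublocale_openSublocale a, fun T _ => by
    rw [nuMap_openSublocale]
    exact (himp_sInf_eq a T).symm⟩

end

/-- in a frame, every closed sublocale `𝔠(a) = {x | a ≤ x}` and every open
sublocale `𝔬(a) = {a ⇨ b | b ∈ L}` is an exact sublocale. -/
theorem closed_and_open_sublocales_exact {L : Type*} [Order.Frame L] (a : L) :
    IsExactSublocale {x : L | a ≤ x} ∧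
      IsExactSublocale {y : L | ∃ b : L, y = a ⇨ b} :=
  ⟨isExactSublocale_closedSublocale a, isExactSublocale_openSublocale a⟩
end

section
/- In a frame L, if p is a covered prime then the two-element sublocale 𝔟(p) = {x ⇨ p : x ∈ L} is an exact sublocale. -/
/-!
The sublocale `𝔟(p)` is `{p, ⊤}`, and its surjection sends `x` to `p` if `x ≤ p` and to `⊤`
otherwise. So `ν(⨅ T) = p` means `⨅ T ≤ p`, and `⨅ ν[T] = p` means some member of `T` lies below
`p`. For an exact meet, `⨅ T ≤ p` gives `⨅ (t ⊔ p) = (⨅ T) ⊔ p = p`, and since `p` is covered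
some `t ⊔ p` equals `p`, that is, `t ≤ p`.
-/

section Frame

variable {L : Type*} [Order.Frame L]

theorem isSublocale_setOf_himp (p : L) : IsSublocale {y : L | ∃ x : L, y = x ⇨ p} := by
  refine ⟨fun T hT => ?_, ?_⟩
  · choose f hf using hT
    refine ⟨⨆ t : T, f t.2, ?_⟩
    rw [iSup_himp_eq, sInf_eq_iInf']
    exact iInf_congr fun t => hf t.2
  · rintro x s ⟨a, rfl⟩
    exact ⟨x ⊓ a, himp_himp x a p⟩

theorem IsPrimeElem.himp_eq_self_of_not_le {p a : L} (hp : IsPrimeElem p) (ha : ¬a ≤ p) :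
    a ⇨ p = p := by
  refine le_antisymm ?_ le_himp
  have : (a ⇨ p) ⊓ a ≤ p := by rw [himp_inf_self]; exact inf_le_left
  exact (hp.2 _ _ this).resolve_right ha

theorem IsPrimeElem.setOf_himp_eq {p : L} (hp : IsPrimeElem p) :
    {y : L | ∃ x : L, y = x ⇨ p} = {p, ⊤} := by
  ext y
  constructor
  · rintro ⟨a, rfl⟩
    by_cases ha : a ≤ p
    · exact Or.inr (himp_eq_top_iff.mpr ha)
    · exact Or.inl (hp.himp_eq_self_of_not_le ha)
  · rintro (rfl | rfl)
    · exact ⟨⊤, top_himp.symm⟩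
    · exact ⟨⊥, (bot_himp p).symm⟩

theorem le_nuMap_pair_top (p x : L) : p ≤ nuMap {p, ⊤} x :=
  le_sInf <| by
    rintro s ⟨rfl | rfl, -⟩
    exacts [le_rfl, le_top]

theorem nuMap_pair_top_of_le {p x : L} (hx : x ≤ p) : nuMap {p, ⊤} x = p :=
  le_antisymm (sInf_le ⟨Or.inl rfl, hx⟩) (le_nuMap_pair_top p x)

theorem nuMap_pair_top_of_not_le {p x : L} (hx : ¬x ≤ p) : nuMap {p, ⊤} x = ⊤ :=
  top_unique <| le_sInf <| by
    rintro s ⟨rfl | rfl, hxs⟩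
    exacts [absurd hxs hx, le_rfl]

theorem ExactInfSet.exists_le_of_sInf_le {T : Set L} {p : L} (hT : ExactInfSet T)
    (hcov : ∀ S : Set L, sInf S = p → p ∈ S) (h : sInf T ≤ p) : ∃ t ∈ T, t ≤ p := by
  have hinf : sInf ((· ⊔ p) '' T) = p := by rw [← hT p, sup_eq_right.mpr h]
  obtain ⟨t, htT, htp⟩ := hcov _ hinf
  exact ⟨t, htT, sup_eq_right.mp htp⟩

theorem sInf_image_nuMap_pair_top {T : Set L} {p : L} (hT : ExactInfSet T)
    (hcov : ∀ S : Set L, sInf S = p → p ∈ S) :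
    sInf (nuMap {p, ⊤} '' T) = nuMap {p, ⊤} (sInf T) := by
  by_cases h : sInf T ≤ p
  · obtain ⟨t, htT, htp⟩ := hT.exists_le_of_sInf_le hcov h
    rw [nuMap_pair_top_of_le h]
    refine le_antisymm ?_ (le_sInf ?_)
    · exact (sInf_le (Set.mem_image_of_mem _ htT)).trans (nuMap_pair_top_of_le htp).le
    · rintro _ ⟨u, -, rfl⟩
      exact le_nuMap_pair_top p u
  · rw [nuMap_pair_top_of_not_le h]
    refine top_unique (le_sInf ?_)
    rintro _ ⟨u, huT, rfl⟩
    exact (nuMap_pair_top_of_not_le fun hu => h ((sInf_le huT).trans hu)).ge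

end Frame

/-- if `p` is a covered prime of a frame `L`, then the two-element sublocale
`𝔟(p) = {x ⇨ p | x ∈ L}` is an exact sublocale. -/
theorem boolean_sublocale_of_covered_prime_exact {L : Type*} [Order.Frame L] (p : L)
    (hp : IsCoveredPrime p) :
    IsExactSublocale {y : L | ∃ x : L, y = x ⇨ p} := by
  refine ⟨isSublocale_setOf_himp p, fun T hT => ?_⟩
  rw [hp.1.setOf_himp_eq]
  exact sInf_image_nuMap_pair_top hT hp.2
end

section
/- In a frame L, if (S_j)_{j∈J} is a family of exact sublocales, then their join in the lattice of sublocales, namely the set {⨅T : T ⊆ ⋃_j S_j}, is a sublocale and is exact. -/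
/-!
The join of the `S j` is the closure of `A = ⋃ j, S j` under infima; it is a sublocale because
`x ⇨ ⨅ U = ⨅ u ∈ U, x ⇨ u` and `A` is closed under `x ⇨ -`. Closing under infima does not
change the associated surjection, since `ν_A x ≤ ⨅ U` whenever `x ≤ ⨅ U` with `U ⊆ A`; and the
surjection of a union is the pointwise infimum `ν_A x = ⨅ j, ν_{S j} x`. A pointwise infimum of
maps preserving a given meet preserves it too, because infima commute with infima.
-/

section

variable {α : Type*} [CompleteLattice α]

def sInfClosure (A : Set α) : Set α :=
  {x : α | ∃ T : Set α, T ⊆ A ∧ sInf T = x}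

lemma subset_sInfClosure (A : Set α) : A ⊆ sInfClosure A := fun a ha =>
  ⟨{a}, Set.singleton_subset_iff.mpr ha, sInf_singleton⟩

lemma sInf_mem_sInfClosure {A T : Set α} (hT : T ⊆ sInfClosure A) : sInf T ∈ sInfClosure A := by
  refine ⟨⋃₀ {U | U ⊆ A ∧ sInf U ∈ T}, Set.sUnion_subset fun U hU => hU.1, ?_⟩
  apply le_antisymm
  · refine le_sInf fun x hx => ?_
    obtain ⟨U, hU, rfl⟩ := hT hx
    exact sInf_le_sInf fun u hu => ⟨U, ⟨hU, hx⟩, hu⟩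
  · exact le_sInf fun u ⟨U, ⟨_, hUT⟩, huU⟩ => (sInf_le hUT).trans (sInf_le huU)

end

section

variable {L : Type*} [Order.Frame L]

lemma himp_mem_sInfClosure {A : Set L} (hA : ∀ x : L, ∀ a ∈ A, x ⇨ a ∈ A) (x : L) {s : L}
    (hs : s ∈ sInfClosure A) : x ⇨ s ∈ sInfClosure A := by
  obtain ⟨U, hU, rfl⟩ := hs
  refine ⟨(x ⇨ ·) '' U, Set.image_subset_iff.mpr fun u hu => hA x u (hU hu), ?_⟩
  rw [sInf_image, sInf_eq_iInf, himp_iInf_eq]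
  simp only [himp_iInf_eq]

lemma isSublocale_sInfClosure {A : Set L} (hA : ∀ x : L, ∀ a ∈ A, x ⇨ a ∈ A) :
    IsSublocale (sInfClosure A) :=
  ⟨fun _ => sInf_mem_sInfClosure, fun x _ => himp_mem_sInfClosure hA x⟩

lemma himp_mem_iUnion {ι : Type*} {S : ι → Set L} (hS : ∀ j, IsSublocale (S j)) (x : L) :
    ∀ a ∈ ⋃ j, S j, x ⇨ a ∈ ⋃ j, S j := by
  simp only [Set.mem_iUnion]
  exact fun a ⟨j, ha⟩ => ⟨j, (hS j).2 x a ha⟩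

lemma nuMap_le_of_mem {S : Set L} {x s : L} (hs : s ∈ S) (hx : x ≤ s) : nuMap S x ≤ s :=
  sInf_le ⟨hs, hx⟩

lemma nuMap_anti {S S' : Set L} (hSS' : S ⊆ S') (x : L) : nuMap S' x ≤ nuMap S x :=
  sInf_le_sInf fun _ hs => ⟨hSS' hs.1, hs.2⟩

lemma nuMap_sInfClosure (A : Set L) : nuMap (sInfClosure A) = nuMap A := by
  funext x
  refine le_antisymm (nuMap_anti (subset_sInfClosure A) x) (le_sInf ?_)
  rintro _ ⟨⟨U, hU, rfl⟩, hxU⟩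
  exact le_sInf fun u hu => nuMap_le_of_mem (hU hu) (hxU.trans (sInf_le hu))

lemma nuMap_iUnion {ι : Type*} (S : ι → Set L) (x : L) :
    nuMap (⋃ j, S j) x = ⨅ j, nuMap (S j) x := by
  simp only [nuMap, sInf_eq_iInf, Set.mem_ofPred_eq, iInf_and, iInf_iUnion]

lemma sInf_image_nuMap_iUnion {ι : Type*} {S : ι → Set L} {T : Set L}
    (hS : ∀ j, sInf (nuMap (S j) '' T) = nuMap (S j) (sInf T)) :
    sInf (nuMap (⋃ j, S j) '' T) = nuMap (⋃ j, S j) (sInf T) := by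
  simp only [sInf_image, nuMap_iUnion] at hS ⊢
  rw [← iInf_congr hS, iInf_comm]
  simp only [iInf_comm (ι := ι)]

end

/-- the join of a family of exact sublocales, namely the set of infima of
subsets of their union, is a sublocale and is exact. -/
theorem join_of_exact_sublocales_exact {L : Type*} [Order.Frame L] {ι : Type*}
    (S : ι → Set L) (h : ∀ j : ι, IsExactSublocale (S j)) :
    IsExactSublocale {x : L | ∃ T : Set L, T ⊆ (⋃ j : ι, S j) ∧ sInf T = x} := by
  change IsExactSublocale (sInfClosure (⋃ j, S j))
  refine ⟨isSublocale_sInfClosure (himp_mem_iUnion fun j => (h j).1), fun T hT => ?_⟩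
  rw [nuMap_sInfClosure]
  exact sInf_image_nuMap_iUnion fun j => (h j).2 T hT
end

section
/- Let C be a complete lattice and L ⊆ C a subset closed under arbitrary suprema (computed in C) and such that every c ∈ C equals ⨅{a ∈ L : c ≤ a}. Then an element x ∈ C is completely join-prime in C (for every D ⊆ C, x ≤ ⨆D implies x ≤ d for some d ∈ D) if and only if for every A ⊆ L, x ≤ ⨆A implies x ≤ a for some a ∈ A. -/
/-!
Both conditions say that `x` is not below the supremum of the elements (of `C`, resp. of `L`)
that are not above `x`. These two suprema coincide: if `x ≰ c`, then `x ≰ ⨅ {a ∈ L | c ≤ a}`,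
so some `a ∈ L` with `c ≤ a` still has `x ≰ a`.
-/

open Set

section CompleteLattice

variable {C : Type*} [CompleteLattice C]

theorem forall_subset_exists_le_of_le_sSup_iff (S : Set C) (x : C) :
    (∀ A : Set C, A ⊆ S → x ≤ sSup A → ∃ a ∈ A, x ≤ a) ↔ ¬x ≤ sSup {a ∈ S | ¬x ≤ a} := by
  constructor
  · intro h hx
    obtain ⟨a, ⟨-, hxa⟩, hxa'⟩ := h _ (sep_subset _ _) hx
    exact hxa hxa'
  · intro h A hAS hxA
    by_contra! hA
    exact h (hxA.trans (sSup_le_sSup fun a ha => ⟨hAS ha, hA a ha⟩))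

theorem exists_mem_le_not_le_of_not_le {L : Set C} (hgen : ∀ c : C, c = sInf {a ∈ L | c ≤ a})
    {x c : C} (hxc : ¬x ≤ c) : ∃ a ∈ L, c ≤ a ∧ ¬x ≤ a := by
  rw [hgen c, le_sInf_iff] at hxc
  push Not at hxc
  obtain ⟨a, ⟨haL, hca⟩, hxa⟩ := hxc
  exact ⟨a, haL, hca, hxa⟩

theorem sSup_not_ge_eq_sSup_sep_of_meet_generating {L : Set C}
    (hgen : ∀ c : C, c = sInf {a ∈ L | c ≤ a}) (x : C) :
    sSup {c | ¬x ≤ c} = sSup {a ∈ L | ¬x ≤ a} := by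
  refine le_antisymm (sSup_le fun c hxc => ?_) (sSup_le_sSup fun a ha => ha.2)
  obtain ⟨a, haL, hca, hxa⟩ := exists_mem_le_not_le_of_not_le hgen hxc
  exact hca.trans (le_sSup ⟨haL, hxa⟩)

end CompleteLattice

theorem completely_join_prime_iff_on_generators_general {C : Type*} [CompleteLattice C]
    (L : Set C)
    (hgen : ∀ c : C, c = sInf {a ∈ L | c ≤ a}) (x : C) :
    (∀ D : Set C, x ≤ sSup D → ∃ d ∈ D, x ≤ d) ↔
      (∀ A : Set C, A ⊆ L → x ≤ sSup A → ∃ a ∈ A, x ≤ a) := by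
  have join_prime_iff := forall_subset_exists_le_of_le_sSup_iff (univ : Set C) x
  simp only [subset_univ, forall_const, mem_univ, true_and] at join_prime_iff
  rw [join_prime_iff, forall_subset_exists_le_of_le_sSup_iff,
    sSup_not_ge_eq_sSup_sep_of_meet_generating hgen]

/-- let `C` be a complete lattice and `L ⊆ C` a subset closed under
arbitrary suprema which meet-generates `C`. Then `x ∈ C` is completely join-prime in `C`
if and only if it is inaccessible by suprema of subsets of `L`. -/
theorem completely_join_prime_iff_on_generators {C : Type*} [CompleteLattice C]
    (L : Set C) (hsup : ∀ A : Set C, A ⊆ L → sSup A ∈ L)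
    (hgen : ∀ c : C, c = sInf {a ∈ L | c ≤ a}) (x : C) :
    (∀ D : Set C, x ≤ sSup D → ∃ d ∈ D, x ≤ d) ↔
      (∀ A : Set C, A ⊆ L → x ≤ sSup A → ∃ a ∈ A, x ≤ a) :=
  completely_join_prime_iff_on_generators_general L hgen x
end

section
/- Let L be a frame and 𝒮 a collection of filters of L closed under arbitrary intersections and containing all principal filters ↑a = {x : a ≤ x}. For P ∈ 𝒮, the following are equivalent: (i) for every family (F_i) of members of 𝒮 with ⋂_i F_i ⊆ P there exists i with F_i ⊆ P; (ii) P is a completely prime filter of L, i.e., for every family (x_i) in L with ⨆_i x_i ∈ P there exists i with x_i ∈ P. -/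
/-!
Principal filters turn joins into intersections: `⋂_{a ∈ A} ↑a = ↑(⨆ A)`, so inaccessibility
of `P` by intersections of principal filters is complete primeness. Conversely, if no `F_i` is
contained in `P`, the join of witnesses `x_i ∈ F_i \ P` lies in every `F_i`, hence in `⋂ F_i`,
while complete primeness keeps it out of `P`.
-/

open Set

theorem IsFrameFilter.isUpperSet {L : Type*} [Order.Frame L] {F : Set L}
    (hF : IsFrameFilter F) : IsUpperSet F :=
  fun _ _ hxy hx => hF.2.1 _ _ hx hxy

section CompleteLattice

variable {α : Type*} [CompleteLattice α]

def IsCompletelyPrime (P : Set α) : Prop :=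
  ∀ A : Set α, sSup A ∈ P → ∃ a ∈ A, a ∈ P

theorem sInter_image_Ici (A : Set α) : ⋂₀ (Ici '' A) = Ici (sSup A) := by
  rw [sInter_image, ← (isLUB_sSup A).upperBounds_eq]
  ext
  simp [upperBounds]

theorem IsUpperSet.isCompletelyPrime {P : Set α} (hP : IsUpperSet P)
    (h : ∀ 𝒢 ⊆ range Ici, ⋂₀ 𝒢 ⊆ P → ∃ F ∈ 𝒢, F ⊆ P) : IsCompletelyPrime P := by
  intro A hA
  have hsub : ⋂₀ (Ici '' A) ⊆ P := by
    rw [sInter_image_Ici]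
    exact fun _ hx => hP hx hA
  obtain ⟨_, ⟨a, ha, rfl⟩, haP⟩ := h _ (image_subset_range _ _) hsub
  exact ⟨a, ha, haP le_rfl⟩

theorem IsCompletelyPrime.exists_subset_of_sInter_subset {P : Set α}
    (hP : IsCompletelyPrime P) {𝒢 : Set (Set α)} (h𝒢 : ∀ F ∈ 𝒢, IsUpperSet F)
    (hsub : ⋂₀ 𝒢 ⊆ P) : ∃ F ∈ 𝒢, F ⊆ P := by
  by_contra! hout
  set A : Set α := {x | x ∉ P ∧ ∃ F ∈ 𝒢, x ∈ F}
  have hA : sSup A ∈ ⋂₀ 𝒢 := fun F hF => by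
    obtain ⟨x, hxF, hxP⟩ := not_subset.mp (hout F hF)
    exact h𝒢 F hF (le_sSup ⟨hxP, F, hF, hxF⟩) hxF
  obtain ⟨a, ⟨haP, -⟩, haP'⟩ := hP A (hsub hA)
  exact haP haP'

end CompleteLattice

theorem completely_prime_in_filter_frame_iff_general {L : Type*} [Order.Frame L]
    (𝒮 : Set (Set L)) (hfilt : ∀ F ∈ 𝒮, IsFrameFilter F)
    (hprin : ∀ a : L, {x : L | a ≤ x} ∈ 𝒮)
    (P : Set L) (hP : P ∈ 𝒮) :
    (∀ 𝒢 : Set (Set L), 𝒢 ⊆ 𝒮 → ⋂₀ 𝒢 ⊆ P → ∃ F ∈ 𝒢, F ⊆ P) ↔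
      (∀ A : Set L, sSup A ∈ P → ∃ a ∈ A, a ∈ P) := by
  have hIci : range Ici ⊆ 𝒮 := range_subset_iff.mpr hprin
  constructor
  · intro h
    exact (hfilt P hP).isUpperSet.isCompletelyPrime fun 𝒢 h𝒢 => h 𝒢 (h𝒢.trans hIci)
  · intro (h : IsCompletelyPrime P) 𝒢 h𝒢
    exact h.exists_subset_of_sInter_subset fun F hF => (hfilt F (h𝒢 hF)).isUpperSet

/-- let `𝒮` be a collection of filters of a frame `L` closed under arbitrary
intersections and containing all principal filters. For `P ∈ 𝒮`, `P` is completely prime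
as an element of `𝒮` (inaccessible by intersections of members of `𝒮`) if and only if `P`
is a completely prime filter of `L`. -/
theorem completely_prime_in_filter_frame_iff {L : Type*} [Order.Frame L]
    (𝒮 : Set (Set L)) (hfilt : ∀ F ∈ 𝒮, IsFrameFilter F)
    (hinter : ∀ 𝒢 : Set (Set L), 𝒢 ⊆ 𝒮 → ⋂₀ 𝒢 ∈ 𝒮)
    (hprin : ∀ a : L, {x : L | a ≤ x} ∈ 𝒮)
    (P : Set L) (hP : P ∈ 𝒮) :
    (∀ 𝒢 : Set (Set L), 𝒢 ⊆ 𝒮 → ⋂₀ 𝒢 ⊆ P → ∃ F ∈ 𝒢, F ⊆ P) ↔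
      (∀ A : Set L, sSup A ∈ P → ∃ a ∈ A, a ∈ P) :=
  completely_prime_in_filter_frame_iff_general 𝒮 hfilt hprin P hP
end

section
/- Let f : X → Y be a continuous map between T_D topological spaces. Then the induced frame homomorphism Opens(Y) → Opens(X), V ↦ f⁻¹(V), is exact: for every family (V_i) of opens of Y with exact infimum in Opens(Y), the family (f⁻¹(V_i)) has exact infimum in Opens(X) and ⨅_i f⁻¹(V_i) = f⁻¹(⨅_i V_i). -/
/-!
In a `T_D` space a family of opens has exact infimum exactly when its intersection is open: if
`U \ V = {x}` with `x` in the intersection, then `U ≤ W ⊔ V` for every member `W`, so exactness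
at `V` gives `x ∈ sInf S ⊔ V`, and `x ∉ V` puts `x` in the interior of the intersection.
Preimages under a continuous map preserve open intersections, and a family with open
intersection is exact in any space.
-/

open TopologicalSpace

namespace TopologicalSpace.Opens

variable {X : Type*} [TopologicalSpace X]

theorem coe_sInf_subset_biInter (S : Set (Opens X)) :
    ((sInf S : Opens X) : Set X) ⊆ ⋂ U ∈ S, (U : Set X) :=
  Set.subset_iInter₂ fun _ hU => sInf_le hU

theorem coe_sInf_of_isOpen {S : Set (Opens X)} (h : IsOpen (⋂ U ∈ S, (U : Set X))) :
    ((sInf S : Opens X) : Set X) = ⋂ U ∈ S, (U : Set X) :=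
  (coe_sInf_subset_biInter S).antisymm <|
    show (⟨_, h⟩ : Opens X) ≤ sInf S from le_sInf fun _ hU => Set.biInter_subset_of_mem hU

theorem exactInfSet_of_isOpen_biInter {S : Set (Opens X)}
    (h : IsOpen (⋂ U ∈ S, (U : Set X))) : ExactInfSet S := by
  intro z
  refine le_antisymm (le_sInf ?_) fun x hx => ?_
  · rintro _ ⟨U, hU, rfl⟩
    exact sup_le_sup_right (sInf_le hU) z
  · have hxU : ∀ U ∈ S, x ∈ U ⊔ z := fun U hU =>
      (sInf_le (Set.mem_image_of_mem (· ⊔ z) hU) : _ ≤ U ⊔ z) hx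
    by_cases hxz : x ∈ z
    · exact Or.inr hxz
    · left
      rw [coe_sInf_of_isOpen h, Set.mem_iInter₂]
      exact fun U hU => (hxU U hU).resolve_right hxz

theorem biInter_comap_image {Y : Type*} [TopologicalSpace Y] (f : C(X, Y)) (S : Set (Opens Y)) :
    ⋂ U ∈ comap f '' S, (U : Set X) = f ⁻¹' ⋂ V ∈ S, (V : Set Y) := by
  rw [Set.biInter_image, Set.preimage_iInter₂]
  rfl

end TopologicalSpace.Opens

namespace IsTD

variable {X : Type*} [TopologicalSpace X]

theorem isOpen_biInter_of_exactInfSet (hX : IsTD X) {S : Set (Opens X)} (hS : ExactInfSet S) :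
    IsOpen (⋂ U ∈ S, (U : Set X)) := by
  suffices h : ⋂ U ∈ S, (U : Set X) ⊆ (sInf S : Opens X) by
    rw [← (Opens.coe_sInf_subset_biInter S).antisymm h]
    exact (sInf S).isOpen
  intro x hx
  obtain ⟨U, V, hUV⟩ := hX x
  have hxUV : x ∈ (U : Set X) \ V := hUV ▸ rfl
  have hU : U ≤ sInf ((· ⊔ V) '' S) := by
    refine le_sInf <| Set.forall_mem_image.2 fun W hW y hyU => ?_
    by_cases hyV : y ∈ V
    · exact Or.inr hyV
    · obtain rfl : y = x := by rw [← Set.mem_singleton_iff, ← hUV]; exact ⟨hyU, hyV⟩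
      exact Or.inl (Set.mem_iInter₂.1 hx W hW)
  rw [← hS V] at hU
  exact (hU hxUV.1).resolve_right hxUV.2

end IsTD

theorem continuous_map_td_exact_general {X Y : Type*} [TopologicalSpace X] [TopologicalSpace Y]
    (hY : IsTD Y) (f : X → Y) (hf : Continuous f) :
    ∀ 𝒱 : Set (Opens Y), ExactInfSet 𝒱 →
      ExactInfSet ((Opens.comap ⟨f, hf⟩ : FrameHom (Opens Y) (Opens X)) '' 𝒱) ∧
      Opens.comap ⟨f, hf⟩ (sInf 𝒱) =
        sInf ((Opens.comap ⟨f, hf⟩ : FrameHom (Opens Y) (Opens X)) '' 𝒱) := by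
  intro 𝒱 h𝒱
  have hY𝒱 := hY.isOpen_biInter_of_exactInfSet h𝒱
  have hX𝒱 : IsOpen (⋂ U ∈ Opens.comap ⟨f, hf⟩ '' 𝒱, (U : Set X)) := by
    rw [Opens.biInter_comap_image]
    exact hY𝒱.preimage hf
  refine ⟨Opens.exactInfSet_of_isOpen_biInter hX𝒱, SetLike.coe_injective ?_⟩
  rw [Opens.coe_comap, Opens.coe_sInf_of_isOpen hY𝒱, Opens.coe_sInf_of_isOpen hX𝒱,
    Opens.biInter_comap_image]

/-- a continuous map `f : X → Y` between `T_D` spaces induces an exact frame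
homomorphism `V ↦ f⁻¹(V)` from `Opens Y` to `Opens X`: exact meets are mapped to exact
meets and are preserved. -/
theorem continuous_map_td_exact {X Y : Type*} [TopologicalSpace X] [TopologicalSpace Y]
    (hX : IsTD X) (hY : IsTD Y) (f : X → Y) (hf : Continuous f) :
    ∀ 𝒱 : Set (Opens Y), ExactInfSet 𝒱 →
      ExactInfSet ((Opens.comap ⟨f, hf⟩ : FrameHom (Opens Y) (Opens X)) '' 𝒱) ∧
      Opens.comap ⟨f, hf⟩ (sInf 𝒱) =
        sInf ((Opens.comap ⟨f, hf⟩ : FrameHom (Opens Y) (Opens X)) '' 𝒱) :=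
  continuous_map_td_exact_general hY f hf
end
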